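/- Let λ ∈ ℂ with λ ≠ 0 and λ ≠ −log n for every integer n ≥ 2. If the Dirichlet series Σ_{n=2}^∞ b_n n^{-s} converges uniformly on the half-plane {s : Re s > ε} for some ε ≥ 0, then for every 0 < δ < 1 the series Σ_{n=2}^∞ b_n / ((log n + λ) n^{s+δ}) converges uniformly on {s : Re s > ε}. -/

import Mathlib

/-!
Abel summation: if the partial sums of `∑ aₙ` are uniformly Cauchy and the scalars `cₙ` have
summable variation `∑ ‖cₙ₊₁ - cₙ‖`, then the partial sums of `∑ cₙ aₙ` are uniformly Cauchy.
Here `cₙ = (n + 2) ^ (-δ) / (log (n + 2) + λ)`. The denominators never vanish and tend to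
infinity, so their inverses are bounded and, since `log (n + 3) - log (n + 2) ≤ 1 / (n + 2)`,
have increments `O(1 / n)`; the antitone factor `(n + 2) ^ (-δ)` makes these summable.
-/

open Filter Topology Finset

section AbelSummation

variable {𝕜 E : Type*} [NormedField 𝕜] [SeminormedAddCommGroup E] [NormedSpace 𝕜 E]

theorem norm_sum_range_smul_le_of_norm_partialSum_le (c : ℕ → 𝕜) (a : ℕ → E) (N : ℕ) {η : ℝ}
    (ha : ∀ k ≤ N, ‖∑ i ∈ range k, a i‖ ≤ η) :
    ‖∑ i ∈ range N, c i • a i‖ ≤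
      (‖c (N - 1)‖ + ∑ i ∈ range (N - 1), ‖c (i + 1) - c i‖) * η := by
  have hη : 0 ≤ η := by simpa using ha 0 N.zero_le
  rw [sum_range_by_parts, add_mul, sum_mul]
  refine (norm_sub_le _ _).trans (add_le_add ?_ ((norm_sum_le _ _).trans (sum_le_sum ?_)))
  · rw [norm_smul]
    exact mul_le_mul_of_nonneg_left (ha N le_rfl) (norm_nonneg _)
  · intro i hi
    rw [norm_smul]
    exact mul_le_mul_of_nonneg_left (ha _ (by simp at hi; omega)) (norm_nonneg _)

theorem norm_le_norm_add_tsum_norm_sub {c : ℕ → E} (hc : Summable fun n ↦ ‖c (n + 1) - c n‖)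
    (k : ℕ) : ‖c k‖ ≤ ‖c 0‖ + ∑' n, ‖c (n + 1) - c n‖ :=
  calc ‖c k‖ = ‖c 0 + ∑ i ∈ range k, (c (i + 1) - c i)‖ := by rw [sum_range_sub, add_sub_cancel]
    _ ≤ ‖c 0‖ + ∑ i ∈ range k, ‖c (i + 1) - c i‖ :=
      (norm_add_le _ _).trans (add_le_add_right (norm_sum_le _ _) _)
    _ ≤ _ := add_le_add_right (hc.sum_le_tsum _ fun _ _ ↦ norm_nonneg _) _

/-- Uniform version of Abel's test. -/
theorem UniformCauchySeqOn.partialSums_smul {α : Type*} {a : ℕ → α → E} {s : Set α}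
    {c : ℕ → 𝕜} (ha : UniformCauchySeqOn (fun N x ↦ ∑ n ∈ range N, a n x) atTop s)
    (hc : Summable fun n ↦ ‖c (n + 1) - c n‖) :
    UniformCauchySeqOn (fun N x ↦ ∑ n ∈ range N, c n • a n x) atTop s := by
  set V := ∑' n, ‖c (n + 1) - c n‖
  set B := ‖c 0‖ + 2 * V
  rw [Metric.uniformCauchySeqOn_iff] at ha ⊢
  intro η hη
  obtain ⟨N, hN⟩ := ha (η / (B + 1)) (by positivity)
  refine ⟨N, fun m hm n hn x hx ↦ ?_⟩
  wlog hnm : n ≤ m generalizing m n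
  · rw [dist_comm]
    exact this n hn m hm (by omega)
  obtain ⟨k, rfl⟩ := Nat.exists_eq_add_of_le hnm
  have htail : ∀ j ≤ k, ‖∑ i ∈ range j, a (n + i) x‖ ≤ η / (B + 1) := fun j _ ↦ by
    have := hN (n + j) (by omega) n hn x hx
    rw [dist_eq_norm, sum_range_add, add_sub_cancel_left] at this
    exact this.le
  have hvar : ∑ i ∈ range (k - 1), ‖c (n + (i + 1)) - c (n + i)‖ ≤ V := by
    have h := hc.sum_le_tsum (Ico n (n + (k - 1))) fun _ _ ↦ norm_nonneg _
    rwa [sum_Ico_eq_sum_range, add_tsub_cancel_left] at h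
  rw [dist_eq_norm, sum_range_add, add_sub_cancel_left]
  calc _ ≤ _ := norm_sum_range_smul_le_of_norm_partialSum_le _ _ k htail
    _ ≤ B * (η / (B + 1)) := by
        gcongr
        linarith [norm_le_norm_add_tsum_norm_sub hc (n + (k - 1))]
    _ < η := by
        rw [mul_div_assoc', div_lt_iff₀ (by positivity)]
        nlinarith

end AbelSummation

theorem UniformCauchySeqOn.exists_tendstoUniformlyOn {ι α β : Type*} [UniformSpace β]
    [CompleteSpace β] {p : Filter ι} [p.NeBot] {F : ι → α → β} {s : Set α}
    (hF : UniformCauchySeqOn F p s) : ∃ f : α → β, TendstoUniformlyOn F f p s := by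
  have : Nonempty ι := p.nonempty_of_neBot
  have hlim : ∀ x, ∃ y, x ∈ s → Tendsto (fun i ↦ F i x) p (𝓝 y) := fun x ↦ by
    by_cases hx : x ∈ s
    · obtain ⟨y, hy⟩ := CompleteSpace.complete (hF.cauchy_map hx)
      exact ⟨y, fun _ ↦ hy⟩
    · exact ⟨F (Classical.arbitrary ι) x, fun h ↦ absurd h hx⟩
  choose f hf using hlim
  exact ⟨f, hF.tendstoUniformlyOn_of_tendsto hf⟩

theorem summable_norm_sub_mul {R : Type*} [SeminormedRing R] {u v : ℕ → R}
    (hu : Summable fun n ↦ ‖u (n + 1) - u n‖ * ‖v n‖)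
    (hv : Summable fun n ↦ ‖u (n + 1)‖ * ‖v (n + 1) - v n‖) :
    Summable fun n ↦ ‖u (n + 1) * v (n + 1) - u n * v n‖ := by
  refine (hv.add hu).of_nonneg_of_le (fun _ ↦ norm_nonneg _) fun n ↦ ?_
  calc ‖u (n + 1) * v (n + 1) - u n * v n‖
      = ‖u (n + 1) * (v (n + 1) - v n) + (u (n + 1) - u n) * v n‖ := by congr 1; noncomm_ring
    _ ≤ _ := (norm_add_le _ _).trans (add_le_add (norm_mul_le _ _) (norm_mul_le _ _))

theorem Antitone.summable_sub_succ {u : ℕ → ℝ} (hu : Antitone u) (h0 : ∀ n, 0 ≤ u n) :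
    Summable fun n ↦ u n - u (n + 1) := by
  refine summable_of_sum_range_le (c := u 0) (fun n ↦ sub_nonneg.2 (hu n.le_succ)) fun n ↦ ?_
  rw [sum_range_sub']
  linarith [h0 n]

theorem Real.log_add_one_sub_log_le {x : ℝ} (hx : 0 < x) :
    Real.log (x + 1) - Real.log x ≤ x⁻¹ := by
  rw [← Real.log_div (by positivity) hx.ne']
  calc Real.log ((x + 1) / x) ≤ (x + 1) / x - 1 := Real.log_le_sub_one_of_pos (by positivity)
    _ = x⁻¹ := by field_simp; ring

noncomputable section

/-- The factor turning the term `b (n + 2) (n + 2) ^ (-s)` into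
`b (n + 2) / ((log (n + 2) + l) (n + 2) ^ (s + δ))`. -/
def resolventWeight (l : ℂ) (δ : ℝ) (n : ℕ) : ℂ :=
  (((n + 2 : ℝ) ^ (-δ) : ℝ) : ℂ) * ((Real.log (n + 2) : ℂ) + l)⁻¹

theorem exists_norm_inv_log_add_le (l : ℂ) :
    ∃ C, ∀ n : ℕ, ‖((Real.log (n + 2) : ℂ) + l)⁻¹‖ ≤ C := by
  have hlog : Tendsto (fun n : ℕ ↦ Real.log (n + 2) - ‖l‖) atTop atTop :=
    tendsto_atTop_add_const_right _ _ (Real.tendsto_log_atTop.comp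
      (tendsto_atTop_add_const_right _ _ tendsto_natCast_atTop_atTop))
  have hnorm : Tendsto (fun n : ℕ ↦ ‖(Real.log (n + 2) : ℂ) + l‖) atTop atTop := by
    refine tendsto_atTop_mono (fun n ↦ ?_) hlog
    have h := norm_sub_norm_le ((Real.log (n + 2) : ℂ)) (-l)
    rw [norm_neg, sub_neg_eq_add, Complex.norm_real, Real.norm_eq_abs] at h
    linarith [le_abs_self (Real.log (n + 2))]
  obtain ⟨C, hC⟩ := (tendsto_inv_atTop_zero.comp hnorm).bddAbove_range
  exact ⟨C, fun n ↦ norm_inv (_ : ℂ) ▸ hC ⟨n, rfl⟩⟩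

theorem norm_log_add_sub_log_add_succ_le (l : ℂ) (n : ℕ) :
    ‖((Real.log (n + 2) : ℂ) + l) - ((Real.log ((n + 1 : ℕ) + 2) : ℂ) + l)‖ ≤ (n + 2 : ℝ)⁻¹ := by
  have hx : (0 : ℝ) < n + 2 := by positivity
  have hmono := Real.log_le_log hx (by linarith : (n + 2 : ℝ) ≤ n + 2 + 1)
  rw [add_sub_add_right_eq_sub, ← Complex.ofReal_sub, Complex.norm_real, Real.norm_eq_abs,
    Nat.cast_succ, add_right_comm _ (1 : ℝ) 2, abs_sub_comm, abs_of_nonneg (by linarith)]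
  exact Real.log_add_one_sub_log_le hx

theorem summable_norm_sub_resolventWeight {l : ℂ}
    (hl : ∀ n : ℕ, 2 ≤ n → l ≠ -(Real.log n : ℂ)) {δ : ℝ} (hδ : 0 < δ) :
    Summable fun n ↦ ‖resolventWeight l δ (n + 1) - resolventWeight l δ n‖ := by
  set u : ℕ → ℝ := fun n ↦ (n + 2 : ℝ) ^ (-δ)
  set w : ℕ → ℂ := fun n ↦ (Real.log (n + 2) : ℂ) + l
  have hw : ∀ n, w n ≠ 0 := fun n h ↦ hl (n + 2) (by omega) (by
    push_cast
    linear_combination h)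
  have hu0 : ∀ n, 0 ≤ u n := fun n ↦ by positivity
  have hu : Antitone u := antitone_nat_of_succ_le fun n ↦
    Real.rpow_le_rpow_of_nonpos (by positivity) (by push_cast; linarith) (by linarith)
  obtain ⟨C, hC⟩ := exists_norm_inv_log_add_le l
  have hC0 : 0 ≤ C := (norm_nonneg _).trans (hC 0)
  refine summable_norm_sub_mul (u := fun n ↦ ((u n : ℝ) : ℂ)) (v := fun n ↦ (w n)⁻¹) ?_ ?_
  · refine ((hu.summable_sub_succ hu0).mul_right C).of_nonneg_of_le (fun _ ↦ by positivity)
      fun n ↦ ?_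
    rw [← Complex.ofReal_sub, Complex.norm_real, Real.norm_eq_abs, abs_sub_comm,
      abs_of_nonneg (sub_nonneg.2 (hu n.le_succ))]
    exact mul_le_mul_of_nonneg_left (hC n) (sub_nonneg.2 (hu n.le_succ))
  · have hp : Summable fun n : ℕ ↦ (n + 2 : ℝ) ^ (-(1 + δ)) := by
      simpa using (summable_nat_add_iff 2).2
        (Real.summable_nat_rpow.2 (by linarith : -(1 + δ) < -1))
    refine (hp.mul_left (C * C)).of_nonneg_of_le (fun _ ↦ by positivity) fun n ↦ ?_
    have hpow : u n * (n + 2 : ℝ)⁻¹ = (n + 2 : ℝ) ^ (-(1 + δ)) := by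
      rw [← Real.rpow_neg_one, ← Real.rpow_add (by positivity)]
      ring_nf
    calc ‖((u (n + 1) : ℝ) : ℂ)‖ * ‖(w (n + 1))⁻¹ - (w n)⁻¹‖
        = u (n + 1) * (‖(w (n + 1))⁻¹‖ * ‖w n - w (n + 1)‖ * ‖(w n)⁻¹‖) := by
          rw [Complex.norm_real, Real.norm_eq_abs, abs_of_nonneg (hu0 _),
            inv_sub_inv' (hw _) (hw n), norm_mul, norm_mul]
      _ ≤ u n * (C * (n + 2 : ℝ)⁻¹ * C) := by
          gcongr
          exacts [hu n.le_succ, hC _, norm_log_add_sub_log_add_succ_le l n, hC n]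
      _ = C * C * (n + 2 : ℝ) ^ (-(1 + δ)) := by rw [← hpow]; ring

theorem div_log_add_mul_exp_eq (b l s : ℂ) (δ : ℝ) (n : ℕ) :
    b / (((Real.log (n + 2) : ℂ) + l) * Complex.exp ((s + δ) * Real.log (n + 2))) =
      resolventWeight l δ n * (b * Complex.exp (-s * Real.log (n + 2))) := by
  have hexp : Complex.exp (-((s + δ) * Real.log (n + 2))) =
      Complex.exp (-δ * Real.log (n + 2)) * Complex.exp (-s * Real.log (n + 2)) := by
    rw [← Complex.exp_add]
    ring_nf
  rw [resolventWeight, Real.rpow_def_of_pos (by positivity), div_eq_mul_inv, mul_inv,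
    ← Complex.exp_neg, hexp]
  push_cast
  ring_nf

end

theorem resolvent_dirichlet_series_unif_conv_general
    (l : ℂ) (hl : ∀ n : ℕ, 2 ≤ n → l ≠ -(Real.log n : ℂ))
    (b : ℕ → ℂ) (ε : ℝ) (f : ℂ → ℂ)
    (hf : TendstoUniformlyOn
      (fun N s => ∑ n ∈ Finset.range N,
        b (n + 2) * Complex.exp (-s * Real.log (n + 2))) f atTop {s : ℂ | ε < s.re}) :
    ∀ δ : ℝ, 0 < δ → δ < 1 →
      ∃ g : ℂ → ℂ, TendstoUniformlyOn
        (fun N s => ∑ n ∈ Finset.range N,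
          b (n + 2) / (((Real.log (n + 2) : ℂ) + l) *
            Complex.exp ((s + δ) * Real.log (n + 2))))
        g atTop {s : ℂ | ε < s.re} := by
  intro δ hδ _
  have h := hf.uniformCauchySeqOn.partialSums_smul (summable_norm_sub_resolventWeight hl hδ)
  simp only [smul_eq_mul, ← div_log_add_mul_exp_eq] at h
  exact h.exists_tendstoUniformlyOn

/-- Resolvent estimate: let `λ ≠ 0` with `λ ≠ -log n` for all `n ≥ 2`. If
`∑_{n≥2} b_n n^{-s}` converges uniformly on `{Re s > ε}` (some `ε ≥ 0`), then for every
`0 < δ < 1` the series `∑_{n≥2} b_n / ((log n + λ) n^{s+δ})` converges uniformly on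
`{Re s > ε}`. -/
theorem resolvent_dirichlet_series_unif_conv
    (l : ℂ) (hl0 : l ≠ 0) (hl : ∀ n : ℕ, 2 ≤ n → l ≠ -(Real.log n : ℂ))
    (b : ℕ → ℂ) (ε : ℝ) (hε : 0 ≤ ε) (f : ℂ → ℂ)
    (hf : TendstoUniformlyOn
      (fun N s => ∑ n ∈ Finset.range N,
        b (n + 2) * Complex.exp (-s * Real.log (n + 2))) f atTop {s : ℂ | ε < s.re}) :
    ∀ δ : ℝ, 0 < δ → δ < 1 →
      ∃ g : ℂ → ℂ, TendstoUniformlyOn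
        (fun N s => ∑ n ∈ Finset.range N,
          b (n + 2) / (((Real.log (n + 2) : ℂ) + l) *
            Complex.exp ((s + δ) * Real.log (n + 2))))
        g atTop {s : ℂ | ε < s.re} :=
  resolvent_dirichlet_series_unif_conv_general l hl b ε f hf
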